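/- Under the stated assumptions, for any vector x ∈ ℝⁿ, the vectors Ŷ = Ŵ⁻¹V'M_F x and β* = (F'F)⁻¹F'(x − VŶ) solve Henderson's mixed model equations for the FDSLRM, i.e. F'Fβ* + F'VŶ = F'x and V'Fβ* + Ĝ_V Ŷ = V'x, where Ĝ_V = V'V + σ₀²D⁻¹. -/

import Mathlib

/-!
The rank condition makes `F` injective, so `FᵀF` is invertible and `M_F = 1 - F(FᵀF)⁻¹Fᵀ` is a
symmetric idempotent. Hence `VᵀM_FV = (M_FV)ᵀ(M_FV)` is positive semidefinite, `Ŵ` is positive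
definite and `ŴŶ = VᵀM_F x`. The first equation is the normal equation defining `β*`; in the second,
`VᵀFβ* = Vᵀ(1 - M_F)(x - VŶ)` reduces it to `ŴŶ = VᵀM_F x`.
-/

open Matrix

namespace Matrix

variable {m p q : Type*} [Fintype p]

theorem mulVec_injective_of_rank_eq_card {K : Type*} [Field K] (A : Matrix m p K)
    (h : A.rank = Fintype.card p) : Function.Injective A.mulVec := by
  rw [mulVec_injective_iff, linearIndependent_iff_card_eq_finrank_span, ← h,
    rank_eq_finrank_span_cols]
  rfl

theorem mulVec_injective_of_fromCols [Fintype q] {R : Type*} [CommSemiring R] {A : Matrix m p R}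
    {B : Matrix m q R} (h : Function.Injective (fromCols A B).mulVec) :
    Function.Injective A.mulVec := fun a b hab =>
  (Sum.elim_eq_iff.mp (h (by rw [fromCols_mulVec_sumElim, fromCols_mulVec_sumElim, hab]) :
    Sum.elim a (0 : q → R) = Sum.elim b 0)).1

theorem isUnit_det_transpose_mul_self_of_injective [Fintype m] [DecidableEq p] {A : Matrix m p ℝ}
    (hA : Function.Injective A.mulVec) : IsUnit (Aᵀ * A).det :=
  (isUnit_iff_isUnit_det _).mp (PosDef.conjTranspose_mul_self A hA).isUnit

theorem mulVec_nonsing_inv_mul_mulVec [Fintype m] {R : Type*} [CommRing R] [Fintype q]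
    [DecidableEq q]
    {W : Matrix q q R} (hW : IsUnit W.det) (B : Matrix q m R) (x : m → R) :
    W *ᵥ ((W⁻¹ * B) *ᵥ x) = B *ᵥ x := by
  rw [mulVec_mulVec, ← Matrix.mul_assoc, mul_nonsing_inv _ hW, Matrix.one_mul]

section ResidualMaker

variable [Fintype m] [DecidableEq p] {R : Type*} [CommRing R] (F : Matrix m p R)

noncomputable def residualMaker [DecidableEq m] : Matrix m m R := 1 - F * (Fᵀ * F)⁻¹ * Fᵀ

theorem transpose_residualMaker [DecidableEq m] : (residualMaker F)ᵀ = residualMaker F := by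
  simp only [residualMaker, transpose_sub, transpose_one, transpose_mul, transpose_transpose,
    transpose_nonsing_inv, Matrix.mul_assoc]

variable {F}

theorem residualMaker_mul_self [DecidableEq m] (hF : IsUnit (Fᵀ * F).det) :
    residualMaker F * residualMaker F = residualMaker F := by
  have hP : F * (Fᵀ * F)⁻¹ * Fᵀ * (F * (Fᵀ * F)⁻¹ * Fᵀ) = F * (Fᵀ * F)⁻¹ * Fᵀ := by
    calc F * (Fᵀ * F)⁻¹ * Fᵀ * (F * (Fᵀ * F)⁻¹ * Fᵀ)
        = F * ((Fᵀ * F)⁻¹ * (Fᵀ * F)) * ((Fᵀ * F)⁻¹ * Fᵀ) := by simp only [Matrix.mul_assoc]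
      _ = F * (Fᵀ * F)⁻¹ * Fᵀ := by rw [nonsing_inv_mul _ hF, Matrix.mul_one, Matrix.mul_assoc]
  rw [residualMaker, Matrix.sub_mul, Matrix.one_mul, Matrix.mul_sub, Matrix.mul_one, hP]
  abel

theorem transpose_mul_residualMaker_mul_eq [DecidableEq m] [Fintype q] (hF : IsUnit (Fᵀ * F).det)
    (V : Matrix m q R) :
    Vᵀ * residualMaker F * V = (residualMaker F * V)ᵀ * (residualMaker F * V) := by
  rw [transpose_mul, transpose_residualMaker, Matrix.mul_assoc, Matrix.mul_assoc,
    ← Matrix.mul_assoc (residualMaker F), residualMaker_mul_self hF]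

theorem henderson_fixed_eq [Fintype q] (hF : IsUnit (Fᵀ * F).det) (V : Matrix m q R)
    (x : m → R) (Y : q → R) :
    (Fᵀ * F) *ᵥ (((Fᵀ * F)⁻¹ * Fᵀ) *ᵥ (x - V *ᵥ Y)) + (Fᵀ * V) *ᵥ Y = Fᵀ *ᵥ x := by
  rw [mulVec_nonsing_inv_mul_mulVec hF, mulVec_sub, mulVec_mulVec]
  abel

theorem henderson_random_eq [DecidableEq m] [Fintype q] (V : Matrix m q R) (S : Matrix q q R)
    (x : m → R) {Y : q → R}
    (hY : (Vᵀ * residualMaker F * V + S) *ᵥ Y = (Vᵀ * residualMaker F) *ᵥ x) :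
    (Vᵀ * F) *ᵥ (((Fᵀ * F)⁻¹ * Fᵀ) *ᵥ (x - V *ᵥ Y)) + (Vᵀ * V + S) *ᵥ Y = Vᵀ *ᵥ x := by
  have hproj : Vᵀ * F * ((Fᵀ * F)⁻¹ * Fᵀ) = Vᵀ - Vᵀ * residualMaker F := by
    simp only [residualMaker, Matrix.mul_sub, Matrix.mul_one, sub_sub_cancel, Matrix.mul_assoc]
  rw [mulVec_mulVec, hproj]
  simp only [sub_mulVec, add_mulVec, mulVec_sub, ← mulVec_mulVec] at hY ⊢
  linear_combination hY

theorem posDef_transpose_mul_residualMaker_mul_add [DecidableEq m] [Fintype q] {F : Matrix m p ℝ}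
    (hF : IsUnit (Fᵀ * F).det) (V : Matrix m q ℝ) {S : Matrix q q ℝ} (hS : S.PosDef) :
    (Vᵀ * residualMaker F * V + S).PosDef := by
  refine PosDef.posSemidef_add ?_ hS
  rw [transpose_mul_residualMaker_mul_eq hF]
  simpa using posSemidef_conjTranspose_mul_self (residualMaker F * V)

end ResidualMaker

end Matrix

theorem stmt_4_general {n k l : ℕ}
    (F : Matrix (Fin n) (Fin k) ℝ) (V : Matrix (Fin n) (Fin l) ℝ)
    (hrank : (Matrix.fromCols F V).rank = k + l)
    (σ0 : ℝ) (hσ0 : 0 < σ0)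
    (σ : Fin l → ℝ) (hσ : ∀ j, 0 < σ j)
    (D : Matrix (Fin l) (Fin l) ℝ) (hD : D = Matrix.diagonal σ)
    (Mf : Matrix (Fin n) (Fin n) ℝ) (hMf : Mf = 1 - F * (Fᵀ * F)⁻¹ * Fᵀ)
    (What : Matrix (Fin l) (Fin l) ℝ) (hWhat : What = Vᵀ * Mf * V + σ0 • D⁻¹)
    (GV : Matrix (Fin l) (Fin l) ℝ) (hGV : GV = Vᵀ * V + σ0 • D⁻¹)
    (x : Fin n → ℝ)
    (Yhat : Fin l → ℝ) (hYhat : Yhat = (What⁻¹ * Vᵀ * Mf).mulVec x)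
    (βstar : Fin k → ℝ)
    (hβstar : βstar = ((Fᵀ * F)⁻¹ * Fᵀ).mulVec (x - V.mulVec Yhat)) :
    (Fᵀ * F).mulVec βstar + (Fᵀ * V).mulVec Yhat = Fᵀ.mulVec x ∧
    (Vᵀ * F).mulVec βstar + GV.mulVec Yhat = Vᵀ.mulVec x := by
  change Mf = residualMaker F at hMf
  subst hD hMf hWhat hGV hβstar
  have hF : IsUnit (Fᵀ * F).det := isUnit_det_transpose_mul_self_of_injective <|
    mulVec_injective_of_fromCols <|
      mulVec_injective_of_rank_eq_card (fromCols F V) (by simpa using hrank)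
  have hW : IsUnit (Vᵀ * residualMaker F * V + σ0 • (diagonal σ)⁻¹).det :=
    (isUnit_iff_isUnit_det _).mp (posDef_transpose_mul_residualMaker_mul_add hF V
      (((posDef_diagonal_iff.mpr hσ).inv).smul hσ0)).isUnit
  refine ⟨henderson_fixed_eq hF V x Yhat, henderson_random_eq V _ x ?_⟩
  rw [hYhat, Matrix.mul_assoc _ Vᵀ, mulVec_nonsing_inv_mul_mulVec hW]

/-- The vectors `Ŷ = Ŵ⁻¹V'M_F x` and `β* = (F'F)⁻¹F'(x − VŶ)` solve Henderson's
mixed model equations `F'Fβ* + F'VŶ = F'x` and `V'Fβ* + Ĝ_V Ŷ = V'x`. -/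
theorem stmt_4 {n k l : ℕ} (hn : 0 < n) (hk : 0 < k) (hl : 0 < l)
    (hnkl : k + l < n)
    (F : Matrix (Fin n) (Fin k) ℝ) (V : Matrix (Fin n) (Fin l) ℝ)
    (hrank : (Matrix.fromCols F V).rank = k + l)
    (σ0 : ℝ) (hσ0 : 0 < σ0)
    (σ : Fin l → ℝ) (hσ : ∀ j, 0 < σ j)
    (D : Matrix (Fin l) (Fin l) ℝ) (hD : D = Matrix.diagonal σ)
    (Mf : Matrix (Fin n) (Fin n) ℝ) (hMf : Mf = 1 - F * (Fᵀ * F)⁻¹ * Fᵀ)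
    (What : Matrix (Fin l) (Fin l) ℝ) (hWhat : What = Vᵀ * Mf * V + σ0 • D⁻¹)
    (GV : Matrix (Fin l) (Fin l) ℝ) (hGV : GV = Vᵀ * V + σ0 • D⁻¹)
    (x : Fin n → ℝ)
    (Yhat : Fin l → ℝ) (hYhat : Yhat = (What⁻¹ * Vᵀ * Mf).mulVec x)
    (βstar : Fin k → ℝ)
    (hβstar : βstar = ((Fᵀ * F)⁻¹ * Fᵀ).mulVec (x - V.mulVec Yhat)) :
    (Fᵀ * F).mulVec βstar + (Fᵀ * V).mulVec Yhat = Fᵀ.mulVec x ∧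
    (Vᵀ * F).mulVec βstar + GV.mulVec Yhat = Vᵀ.mulVec x :=
  stmt_4_general F V hrank σ0 hσ0 σ hσ D hD Mf hMf What hWhat GV hGV x Yhat hYhat βstar hβstar
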